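/- arXiv:2212.13789 — 11 statements merged into one kernel-verified Lean document; each statement's English description precedes it below -/
import Mathlib

section
/- Let Y be a linear subspace of a topological vector space X and let A ⊆ X be an open convex set intersecting Y. Then closure(A ∩ Y) = closure(A) ∩ closure(Y). -/
open Set

/- For `a ∈ A ∩ C` and `x ∈ closure A ∩ closure C`, the open segment from `a` to `x` lies in the
open set `A` and in the convex set `closure C`, hence in `closure (A ∩ C)`; and `x` is a limit
point of that segment. -/
theorem Convex.closure_inter_eq_of_isOpen {𝕜 E : Type*} [Field 𝕜] [LinearOrder 𝕜]
    [IsStrictOrderedRing 𝕜] [TopologicalSpace 𝕜] [OrderTopology 𝕜] [AddCommGroup E]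
    [TopologicalSpace E] [IsTopologicalAddGroup E] [Module 𝕜 E] [ContinuousSMul 𝕜 E]
    {A C : Set E} (hAopen : IsOpen A) (hAconv : Convex 𝕜 A) (hC : Convex 𝕜 C)
    (hne : (A ∩ C).Nonempty) :
    closure (A ∩ C) = closure A ∩ closure C := by
  refine (closure_inter_subset_inter_closure A C).antisymm ?_
  rintro x ⟨hxA, hxC⟩
  obtain ⟨a, haA, haC⟩ := hne
  have hsegA : openSegment 𝕜 a x ⊆ A := by
    have := hAconv.openSegment_interior_closure_subset_interior (x := a) (y := x)
    rw [hAopen.interior_eq] at this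
    exact this haA hxA
  have hsegC : openSegment 𝕜 a x ⊆ closure C :=
    hC.closure.openSegment_subset (subset_closure haC) hxC
  have hseg : openSegment 𝕜 a x ⊆ closure (A ∩ C) :=
    (subset_inter hsegA hsegC).trans hAopen.inter_closure
  exact closure_minimal hseg isClosed_closure
    (segment_subset_closure_openSegment (right_mem_segment 𝕜 a x))

theorem stmt_1 {X : Type*} [AddCommGroup X] [Module ℝ X] [TopologicalSpace X]
    [IsTopologicalAddGroup X] [ContinuousSMul ℝ X]
    (Y : Submodule ℝ X) (A : Set X) (hAopen : IsOpen A) (hAconv : Convex ℝ A)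
    (hne : (A ∩ (Y : Set X)).Nonempty) :
    closure (A ∩ (Y : Set X)) = closure A ∩ closure (Y : Set X) :=
  hAconv.closure_inter_eq_of_isOpen hAopen Y.convex hne
end

section
/- Let Y be a linear subspace of a topological vector space X and let A ⊆ X be an open convex set intersecting Y. Then A ∩ Y is relatively closed in A if and only if Y is closed in X. -/
/-!
Relative closedness of `A ∩ Y` in the open set `A` says `A ∩ closure Y ⊆ Y`. Given `y ∈ closure Y`
and `a ∈ A ∩ Y`, the point `a + t • (y - a)` lies in `A` for some small `t ≠ 0`, and in the subspace
`closure Y`; hence it lies in `Y`, and so does `y = a + t⁻¹ • ((a + t • (y - a)) - a)`.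
-/

open Filter Set Topology

theorem IsOpen.inter_eq_closure_inter_inter_iff {X : Type*} [TopologicalSpace X] {A S : Set X}
    (hA : IsOpen A) : A ∩ S = closure (A ∩ S) ∩ A ↔ A ∩ closure S ⊆ S := by
  constructor
  · intro h x hx
    have hx' : x ∈ closure (A ∩ S) ∩ A := ⟨hA.inter_closure hx, hx.1⟩
    rw [← h] at hx'
    exact hx'.2
  · intro h
    refine Subset.antisymm (fun x hx => ⟨subset_closure hx, hx.1⟩) fun x hx => ⟨hx.2, h ?_⟩
    exact ⟨hx.2, closure_mono inter_subset_right hx.1⟩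

theorem Submodule.mem_of_add_smul_sub_mem {K M : Type*} [DivisionRing K] [AddCommGroup M]
    [Module K M]
    (Y : Submodule K M) {a y : M} {t : K} (ha : a ∈ Y) (ht : t ≠ 0) (h : a + t • (y - a) ∈ Y) :
    y ∈ Y :=
  (Y.sub_mem_iff_left ha).1 <| (Y.smul_mem_iff ht).1 <| (Y.add_mem_iff_right ha).1 h

section

variable {𝕜 X : Type*} [NontriviallyNormedField 𝕜] [AddCommGroup X] [Module 𝕜 X]
  [TopologicalSpace X] [ContinuousAdd X] [ContinuousSMul 𝕜 X]

theorem IsOpen.exists_ne_zero_add_smul_sub_mem {A : Set X} (hA : IsOpen A) {a : X} (ha : a ∈ A)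
    (y : X) : ∃ t : 𝕜, t ≠ 0 ∧ a + t • (y - a) ∈ A := by
  have hcont : Continuous fun t : 𝕜 => a + t • (y - a) := by fun_prop
  have hnhds : ∀ᶠ t in 𝓝 (0 : 𝕜), a + t • (y - a) ∈ A :=
    hcont.continuousAt.preimage_mem_nhds (by simpa using hA.mem_nhds ha)
  obtain ⟨t, hmem, ht⟩ :=
    ((hnhds.filter_mono nhdsWithin_le_nhds).and (self_mem_nhdsWithin (s := {0}ᶜ))).exists
  exact ⟨t, ht, hmem⟩

theorem Submodule.isClosed_of_inter_closure_subset (Y : Submodule 𝕜 X) {A : Set X}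
    (hA : IsOpen A) (hne : (A ∩ Y).Nonempty) (h : A ∩ closure Y ⊆ Y) : IsClosed (Y : Set X) := by
  refine isClosed_of_closure_subset fun y hy => ?_
  obtain ⟨a, haA, haY⟩ := hne
  obtain ⟨t, ht, hpA⟩ := hA.exists_ne_zero_add_smul_sub_mem (𝕜 := 𝕜) haA y
  have hy' : y ∈ Y.topologicalClosure := hy
  have ha' : a ∈ Y.topologicalClosure := Y.le_topologicalClosure haY
  have hp : a + t • (y - a) ∈ Y.topologicalClosure :=
    add_mem ha' (Submodule.smul_mem _ t (sub_mem hy' ha'))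
  exact Y.mem_of_add_smul_sub_mem haY ht (h ⟨hpA, hp⟩)

end

theorem stmt_2_general {X : Type*} [AddCommGroup X] [Module ℝ X] [TopologicalSpace X]
    [IsTopologicalAddGroup X] [ContinuousSMul ℝ X]
    (Y : Submodule ℝ X) (A : Set X) (hAopen : IsOpen A)
    (hne : (A ∩ (Y : Set X)).Nonempty) :
    (A ∩ (Y : Set X) = closure (A ∩ (Y : Set X)) ∩ A) ↔ IsClosed (Y : Set X) := by
  rw [hAopen.inter_eq_closure_inter_inter_iff]
  refine ⟨Y.isClosed_of_inter_closure_subset hAopen hne, fun hY => ?_⟩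
  rw [hY.closure_eq]
  exact inter_subset_right

theorem stmt_2 {X : Type*} [AddCommGroup X] [Module ℝ X] [TopologicalSpace X]
    [IsTopologicalAddGroup X] [ContinuousSMul ℝ X]
    (Y : Submodule ℝ X) (A : Set X) (hAopen : IsOpen A) (hAconv : Convex ℝ A)
    (hne : (A ∩ (Y : Set X)).Nonempty) :
    (A ∩ (Y : Set X) = closure (A ∩ (Y : Set X)) ∩ A) ↔ IsClosed (Y : Set X) :=
  stmt_2_general Y A hAopen hne
end

section
/- Let Y be a linear subspace of a vector space X, let C ⊆ Y and A ⊆ X be convex sets. Then conv(A ∪ C) ∩ Y = conv((Y ∩ A) ∪ C), where conv denotes the convex hull. -/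
theorem stmt_3 {X : Type*} [AddCommGroup X] [Module ℝ X]
    (Y : Submodule ℝ X) (C A : Set X) (hCY : C ⊆ (Y : Set X))
    (hCconv : Convex ℝ C) (hAconv : Convex ℝ A) :
    convexHull ℝ (A ∪ C) ∩ (Y : Set X) = convexHull ℝ (((Y : Set X) ∩ A) ∪ C) := by
  apply Set.Subset.antisymm
  · rcases A.eq_empty_or_nonempty with hA | hA
    · subst hA
      simp only [Set.empty_union, Set.inter_empty, hCconv.convexHull_eq]
      exact fun x hx => hx.1
    rcases C.eq_empty_or_nonempty with hC | hC
    · subst hC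
      simp only [Set.union_empty, hAconv.convexHull_eq]
      rintro x ⟨hxA, hxY⟩
      exact subset_convexHull ℝ (↑Y ∩ A) ⟨hxY, hxA⟩
    rintro x ⟨hx, hxY⟩
    rw [hAconv.convexHull_union hCconv hA hC, mem_convexJoin] at hx
    obtain ⟨a, ha, c, hc, θ, μ, hθ, hμ, hsum, rfl⟩ := hx
    by_cases hθ0 : θ = 0
    · subst hθ0
      simp only [zero_add] at hsum
      subst hsum
      simpa using subset_convexHull ℝ ((↑Y ∩ A) ∪ C) (Or.inr hc)
    · have haY : a ∈ (Y : Set X) := by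
        have h1 : θ • a ∈ Y := by
          have : θ • a = (θ • a + μ • c) - μ • c := by abel
          rw [this]
          exact Y.sub_mem hxY (Y.smul_mem μ (hCY hc))
        have := Y.smul_mem θ⁻¹ h1
        rwa [smul_smul, inv_mul_cancel₀ hθ0, one_smul] at this
      have hconv := convex_convexHull ℝ (((Y : Set X) ∩ A) ∪ C)
      exact hconv (subset_convexHull ℝ ((↑Y ∩ A) ∪ C) (Or.inl ⟨haY, ha⟩))
        (subset_convexHull ℝ ((↑Y ∩ A) ∪ C) (Or.inr hc)) hθ hμ hsum
  · intro x hx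
    refine ⟨convexHull_mono (Set.union_subset_union_left C Set.inter_subset_right) hx, ?_⟩
    have : convexHull ℝ (((Y : Set X) ∩ A) ∪ C) ⊆ (Y : Set X) :=
      convexHull_min (Set.union_subset Set.inter_subset_left hCY) (Y.convex)
    exact this hx
end

section
/- Let Y be a linear subspace of a topological vector space X, C ⊆ Y a convex set open in the subspace topology of Y, and A ⊆ X an open convex set with A ∩ C ≠ ∅. Then conv(A ∪ C) is open in X. -/
/-!
Let `K = conv (A ∪ C)` and pick `x₀ ∈ A ∩ C`. Since the interior of a convex set is convex, it
suffices to show `A ∪ C ⊆ interior K`. Points of the open set `A` are interior. A point `c ∈ C`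
can be pushed slightly beyond itself, away from `x₀`, inside the line through `x₀` and `c`; this
line lies in `Y`, so relative openness keeps the new point `c'` in `C`. Then `c` lies on the open
segment from the interior point `x₀` to `c' ∈ K`, hence is interior as well.
-/

open Set Filter Topology

theorem mem_openSegment_add_smul_sub {E : Type*} [AddCommGroup E] [Module ℝ E] (x c : E)
    {ε : ℝ} (hε : 0 < ε) : c ∈ openSegment ℝ x (c + ε • (c - x)) := by
  refine ⟨ε / (ε + 1), 1 / (ε + 1), by positivity, by positivity, ?_, ?_⟩
  · rw [← add_div, div_self (by positivity)]
  match_scalars <;> field_simp <;> ring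

section

variable {X : Type*} [AddCommGroup X] [Module ℝ X] [TopologicalSpace X]
  [IsTopologicalAddGroup X] [ContinuousSMul ℝ X]

theorem IsOpen.exists_pos_add_smul_mem {G : Set X} (hG : IsOpen G) {c : X} (hc : c ∈ G)
    (v : X) : ∃ ε > (0 : ℝ), c + ε • v ∈ G := by
  have hcont : Continuous fun ε : ℝ => c + ε • v := by fun_prop
  have hnear : ∀ᶠ ε in 𝓝 (0 : ℝ), c + ε • v ∈ G :=
    hcont.continuousAt.eventually_mem (hG.mem_nhds (by simpa using hc))
  obtain ⟨ε, hεG, hεpos⟩ := ((hnear.filter_mono nhdsWithin_le_nhds).and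
    (self_mem_nhdsWithin : Ioi (0 : ℝ) ∈ 𝓝[>] 0)).exists
  exact ⟨ε, hεpos, hεG⟩

theorem exists_mem_openSegment_of_isOpen_inter (Y : Submodule ℝ X) {G : Set X}
    (hG : IsOpen G) {x c : X} (hx : x ∈ Y) (hc : c ∈ G ∩ (Y : Set X)) : ∃ c' ∈ G ∩ (Y : Set X), c ∈ openSegment ℝ x c' := by
  obtain ⟨ε, hε, hεG⟩ := hG.exists_pos_add_smul_mem hc.1 (c - x)
  exact ⟨_, ⟨hεG, Y.add_mem hc.2 (Y.smul_mem ε (Y.sub_mem hc.2 hx))⟩,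
    mem_openSegment_add_smul_sub x c hε⟩

theorem isOpen_convexHull_of_subset_interior {s : Set X}
    (hs : s ⊆ interior (convexHull ℝ s)) : IsOpen (convexHull ℝ s) :=
  subset_interior_iff_isOpen.1 <|
    ((convex_convexHull ℝ s).interior.convexHull_subset_iff).2 hs

end

theorem stmt_4_general {X : Type*} [AddCommGroup X] [Module ℝ X] [TopologicalSpace X]
    [IsTopologicalAddGroup X] [ContinuousSMul ℝ X]
    (Y : Submodule ℝ X) (C A : Set X)
    (hCopen : ∃ G : Set X, IsOpen G ∧ C = G ∩ (Y : Set X))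
    (hAopen : IsOpen A) (hne : (A ∩ C).Nonempty) :
    IsOpen (convexHull ℝ (A ∪ C)) := by
  obtain ⟨x₀, hx₀A, hx₀C⟩ := hne
  obtain ⟨G, hG, rfl⟩ := hCopen
  have hA : A ⊆ interior (convexHull ℝ (A ∪ G ∩ Y)) :=
    interior_maximal (subset_union_left.trans (subset_convexHull ℝ _)) hAopen
  have hC : G ∩ (Y : Set X) ⊆ interior (convexHull ℝ (A ∪ G ∩ Y)) := fun c hc => by
    obtain ⟨c', hc', hcc'⟩ := exists_mem_openSegment_of_isOpen_inter Y hG hx₀C.2 hc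
    exact (convex_convexHull ℝ _).openSegment_interior_self_subset_interior (hA hx₀A)
      (subset_convexHull ℝ _ (Or.inr hc')) hcc'
  exact isOpen_convexHull_of_subset_interior (union_subset hA hC)

theorem stmt_4 {X : Type*} [AddCommGroup X] [Module ℝ X] [TopologicalSpace X]
    [IsTopologicalAddGroup X] [ContinuousSMul ℝ X]
    (Y : Submodule ℝ X) (C A : Set X) (hCY : C ⊆ (Y : Set X)) (hCconv : Convex ℝ C)
    (hCopen : ∃ G : Set X, IsOpen G ∧ C = G ∩ (Y : Set X))
    (hAopen : IsOpen A) (hAconv : Convex ℝ A) (hne : (A ∩ C).Nonempty) :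
    IsOpen (convexHull ℝ (A ∪ C)) :=
  stmt_4_general Y C A hCopen hAopen hne
end

section
/- Let Z be a convex set in a topological vector space X and let {D_α}_{α∈ℝ} be a family of relatively open convex subsets of Z such that ⋂_α D_α = ∅, ⋃_α D_α = Z, and the relative closure of D_α in Z is contained in D_β whenever α < β. Then the function f(x) := sup{α ∈ ℝ : x ∉ D_α} is a well-defined real-valued continuous quasiconvex function on Z, and for each α ∈ ℝ one has {x ∈ Z : f(x) < α} = ⋃_{β<α} D_β and {x ∈ Z : f(x) ≤ α} = ⋂_{γ>α} D_γ. -/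
/-!
Write `f x = sup {a | x ∉ D a}`. Since `D` is increasing, `f x ≤ r` iff `x ∈ D c` for all `c > r`,
and `f x < r` iff `x ∈ D b` for some `b < r`. Hence the sublevel sets of `f` are `⋂_{c > r} D c`,
which are convex, and its strict sublevel sets are `⋃_{b < r} D b`, which are relatively open;
this gives quasiconvexity and upper semicontinuity. Lower semicontinuity comes from the closure
condition: if `r < b < c` and `x ∉ D c`, then `x ∉ closure (D b)`, and `f > r` off that closed set.
-/

open Set Filter Topology

section LevelFunction

variable {α : Type*} {D : ℝ → Set α}

noncomputable def levelFunction (D : ℝ → Set α) (x : α) : ℝ :=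
  sSup {a | x ∉ D a}

lemma nonempty_setOf_notMem (hInter : ⋂ a, D a = ∅) (x : α) : {a | x ∉ D a}.Nonempty := by
  by_contra h
  simp only [not_nonempty_iff_eq_empty, eq_empty_iff_forall_notMem, mem_ofPred_eq, not_not] at h
  simpa [hInter] using mem_iInter.2 h

lemma bddAbove_setOf_notMem (hD : Monotone D) {x : α} {b : ℝ} (hx : x ∈ D b) :
    BddAbove {a | x ∉ D a} :=
  ⟨b, fun _ ha => le_of_not_gt fun hba => ha (hD hba.le hx)⟩

variable (hD : Monotone D) (hInter : ⋂ a, D a = ∅)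
include hD hInter

lemma levelFunction_le_iff {x : α} (hx : x ∈ ⋃ a, D a) {r : ℝ} :
    levelFunction D x ≤ r ↔ ∀ c > r, x ∈ D c := by
  obtain ⟨b, hb⟩ := mem_iUnion.1 hx
  rw [levelFunction, csSup_le_iff (bddAbove_setOf_notMem hD hb) (nonempty_setOf_notMem hInter x)]
  simp only [mem_ofPred_eq, ← not_lt, gt_iff_lt]
  exact forall_congr' fun _ => not_imp_not

lemma lt_levelFunction_iff {x : α} (hx : x ∈ ⋃ a, D a) {r : ℝ} :
    r < levelFunction D x ↔ ∃ c > r, x ∉ D c := by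
  simpa using (levelFunction_le_iff hD hInter hx (r := r)).not

lemma levelFunction_lt_iff {x : α} (hx : x ∈ ⋃ a, D a) {r : ℝ} :
    levelFunction D x < r ↔ ∃ b < r, x ∈ D b := by
  refine ⟨fun h => ?_, fun ⟨b, hbr, hxb⟩ => ?_⟩
  · obtain ⟨b, hxb, hbr⟩ := exists_between h
    exact ⟨b, hbr, (levelFunction_le_iff hD hInter hx).1 le_rfl b hxb⟩
  · exact ((levelFunction_le_iff hD hInter hx).2 fun c hc => hD hc.le hxb).trans_lt hbr

lemma sep_levelFunction_lt (r : ℝ) :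
    {x ∈ ⋃ a, D a | levelFunction D x < r} = ⋃ b < r, D b := by
  ext x
  simp only [mem_sep_iff, mem_iUnion₂, exists_prop]
  refine ⟨fun ⟨hx, h⟩ => (levelFunction_lt_iff hD hInter hx).1 h, fun ⟨b, hbr, hxb⟩ => ?_⟩
  have hx := mem_iUnion_of_mem b hxb
  exact ⟨hx, (levelFunction_lt_iff hD hInter hx).2 ⟨b, hbr, hxb⟩⟩

lemma sep_levelFunction_le (r : ℝ) :
    {x ∈ ⋃ a, D a | levelFunction D x ≤ r} = ⋂ c > r, D c := by
  ext x
  simp only [mem_sep_iff, mem_iInter₂]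
  refine ⟨fun ⟨hx, h⟩ => (levelFunction_le_iff hD hInter hx).1 h, fun h => ?_⟩
  have hx := mem_iUnion_of_mem _ (h (r + 1) (lt_add_one r))
  exact ⟨hx, (levelFunction_le_iff hD hInter hx).2 h⟩

end LevelFunction

lemma quasiconvexOn_levelFunction {𝕜 E : Type*} [Semiring 𝕜] [PartialOrder 𝕜] [AddCommMonoid E]
    [SMul 𝕜 E] {D : ℝ → Set E} (hD : Monotone D) (hInter : ⋂ a, D a = ∅)
    (hconv : ∀ a, Convex 𝕜 (D a)) : QuasiconvexOn 𝕜 (⋃ a, D a) (levelFunction D) := fun r => by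
  rw [sep_levelFunction_le hD hInter r]
  exact convex_iInter₂ fun c _ => hconv c

section Topology

variable {α : Type*} [TopologicalSpace α] {D : ℝ → Set α}

lemma monotone_of_closure_inter_subset
    (hclosure : ∀ a b, a < b → closure (D a) ∩ ⋃ c, D c ⊆ D b) : Monotone D := by
  intro a b hab x hx
  rcases hab.eq_or_lt with rfl | hab
  · exact hx
  · exact hclosure a b hab ⟨subset_closure hx, mem_iUnion_of_mem a hx⟩

lemma lowerSemicontinuousOn_levelFunction (hInter : ⋂ a, D a = ∅)
    (hclosure : ∀ a b, a < b → closure (D a) ∩ ⋃ c, D c ⊆ D b) :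
    LowerSemicontinuousOn (levelFunction D) (⋃ a, D a) := by
  have hD := monotone_of_closure_inter_subset hclosure
  intro x hx r hr
  obtain ⟨c, hrc, hxc⟩ := (lt_levelFunction_iff hD hInter hx).1 hr
  obtain ⟨b, hrb, hbc⟩ := exists_between hrc
  have hxb : x ∉ closure (D b) := fun h => hxc (hclosure b c hbc ⟨h, hx⟩)
  filter_upwards [mem_nhdsWithin_of_mem_nhds (isClosed_closure.isOpen_compl.mem_nhds hxb),
    self_mem_nhdsWithin] with y hyb hy
  exact (lt_levelFunction_iff hD hInter hy).2 ⟨b, hrb, fun h => hyb (subset_closure h)⟩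

lemma upperSemicontinuousOn_levelFunction (hD : Monotone D) (hInter : ⋂ a, D a = ∅)
    (hopen : ∀ a, ∃ U : Set α, IsOpen U ∧ D a = U ∩ ⋃ c, D c) :
    UpperSemicontinuousOn (levelFunction D) (⋃ a, D a) := by
  intro x hx r hr
  obtain ⟨b, hbr, hxb⟩ := (levelFunction_lt_iff hD hInter hx).1 hr
  obtain ⟨U, hU, hDb⟩ := hopen b
  filter_upwards [inter_mem_nhdsWithin _ (hU.mem_nhds (hDb ▸ hxb).1)] with y ⟨hy, hyU⟩
  exact (levelFunction_lt_iff hD hInter hy).2 ⟨b, hbr, hDb ▸ ⟨hyU, hy⟩⟩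

end Topology

theorem stmt_5_general {X : Type*} [AddCommGroup X] [Module ℝ X] [TopologicalSpace X]
    (Z : Set X) (D : ℝ → Set X)
    (hDconv : ∀ α, Convex ℝ (D α))
    (hDopen : ∀ α, ∃ U : Set X, IsOpen U ∧ D α = U ∩ Z)
    (hInter : (⋂ α, D α) = ∅) (hUnion : (⋃ α, D α) = Z)
    (hmono : ∀ α β : ℝ, α < β → closure (D α) ∩ Z ⊆ D β) :
    (∀ x ∈ Z, {α : ℝ | x ∉ D α}.Nonempty ∧ BddAbove {α : ℝ | x ∉ D α}) ∧
    ContinuousOn (fun x => sSup {α : ℝ | x ∉ D α}) Z ∧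
    QuasiconvexOn ℝ Z (fun x => sSup {α : ℝ | x ∉ D α}) ∧
    (∀ α : ℝ, {x ∈ Z | sSup {β : ℝ | x ∉ D β} < α} = ⋃ β < α, D β) ∧
    (∀ α : ℝ, {x ∈ Z | sSup {β : ℝ | x ∉ D β} ≤ α} = ⋂ γ > α, D γ) := by
  subst hUnion
  have hD : Monotone D := monotone_of_closure_inter_subset hmono
  refine ⟨fun x hx => ⟨nonempty_setOf_notMem hInter x, ?_⟩, ?_,
    quasiconvexOn_levelFunction hD hInter hDconv, sep_levelFunction_lt hD hInter,
    sep_levelFunction_le hD hInter⟩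
  · obtain ⟨b, hb⟩ := mem_iUnion.1 hx
    exact bddAbove_setOf_notMem hD hb
  · exact continuousOn_iff_lower_upperSemicontinuousOn.2
      ⟨lowerSemicontinuousOn_levelFunction hInter hmono,
        upperSemicontinuousOn_levelFunction hD hInter hDopen⟩

theorem stmt_5 {X : Type*} [AddCommGroup X] [Module ℝ X] [TopologicalSpace X]
    [IsTopologicalAddGroup X] [ContinuousSMul ℝ X]
    (Z : Set X) (hZconv : Convex ℝ Z) (D : ℝ → Set X)
    (hDZ : ∀ α, D α ⊆ Z) (hDconv : ∀ α, Convex ℝ (D α))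
    (hDopen : ∀ α, ∃ U : Set X, IsOpen U ∧ D α = U ∩ Z)
    (hInter : (⋂ α, D α) = ∅) (hUnion : (⋃ α, D α) = Z)
    (hmono : ∀ α β : ℝ, α < β → closure (D α) ∩ Z ⊆ D β) :
    (∀ x ∈ Z, {α : ℝ | x ∉ D α}.Nonempty ∧ BddAbove {α : ℝ | x ∉ D α}) ∧
    ContinuousOn (fun x => sSup {α : ℝ | x ∉ D α}) Z ∧
    QuasiconvexOn ℝ Z (fun x => sSup {α : ℝ | x ∉ D α}) ∧
    (∀ α : ℝ, {x ∈ Z | sSup {β : ℝ | x ∉ D β} < α} = ⋃ β < α, D β) ∧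
    (∀ α : ℝ, {x ∈ Z | sSup {β : ℝ | x ∉ D β} ≤ α} = ⋂ γ > α, D γ) :=
  stmt_5_general Z D hDconv hDopen hInter hUnion hmono
end

section
/- Let X be a topological vector space, Y ⊆ X a subspace, and A ⊆ X an open convex set intersecting Y. If there exists a continuous quasiconvex function δ : A → [0,∞) with δ⁻¹(0) = A ∩ Y, then A ∩ Y is the intersection of a countable family of sets that are open and convex in X. -/
/-!
The zero set of `δ` is its sublevel set at height `0`, which is the intersection of the strict
sublevel sets at heights `1 / (n + 1)`. Each of these is convex by quasiconvexity and open
because `δ` is continuous on the open set `A`.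
-/

open Set

theorem iInter_sep_lt_add_one_div_eq_sep_le {α : Type*} (s : Set α) (f : α → ℝ) (r : ℝ) :
    ⋂ n : ℕ, {x ∈ s | f x < r + 1 / (n + 1)} = {x ∈ s | f x ≤ r} := by
  ext x
  simp only [mem_iInter, mem_ofPred_eq]
  refine ⟨fun h => ⟨(h 0).1, le_of_forall_pos_lt_add fun ε hε => ?_⟩,
    fun ⟨hx, hr⟩ n => ⟨hx, hr.trans_lt (lt_add_of_pos_right _ Nat.one_div_pos_of_nat)⟩⟩
  obtain ⟨n, hn⟩ := exists_nat_one_div_lt hε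
  exact (h n).2.trans (add_lt_add_right hn r)

theorem QuasiconvexOn.exists_isOpen_convex_iInter_eq_sep_le {E : Type*} [AddCommGroup E]
    [Module ℝ E] [TopologicalSpace E] {s : Set E} {f : E → ℝ} (hs : IsOpen s)
    (hcont : ContinuousOn f s) (hf : QuasiconvexOn ℝ s f) (r : ℝ) :
    ∃ U : ℕ → Set E, (∀ n, IsOpen (U n) ∧ Convex ℝ (U n)) ∧ ⋂ n, U n = {x ∈ s | f x ≤ r} :=
  ⟨fun n => {x ∈ s | f x < r + 1 / (n + 1)},
    fun _ => ⟨hcont.isOpen_inter_preimage hs isOpen_Iio, hf.convex_lt _⟩,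
    iInter_sep_lt_add_one_div_eq_sep_le s f r⟩

theorem stmt_8_general {X : Type*} [AddCommGroup X] [Module ℝ X] [TopologicalSpace X]
    (Y : Submodule ℝ X) (A : Set X) (hAopen : IsOpen A)
    (δ : X → ℝ) (hδcont : ContinuousOn δ A) (hδqc : QuasiconvexOn ℝ A δ)
    (hδnonneg : ∀ x ∈ A, 0 ≤ δ x)
    (hker : {x ∈ A | δ x = 0} = A ∩ (Y : Set X)) :
    ∃ U : ℕ → Set X, (∀ n, IsOpen (U n) ∧ Convex ℝ (U n)) ∧
      (⋂ n, U n) = A ∩ (Y : Set X) := by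
  have hzero : {x ∈ A | δ x ≤ 0} = A ∩ (Y : Set X) := by
    rw [← hker]
    ext x
    exact and_congr_right fun hx => (hδnonneg x hx).ge_iff_eq'
  rw [← hzero]
  exact hδqc.exists_isOpen_convex_iInter_eq_sep_le hAopen hδcont 0

theorem stmt_8 {X : Type*} [AddCommGroup X] [Module ℝ X] [TopologicalSpace X]
    [IsTopologicalAddGroup X] [ContinuousSMul ℝ X]
    (Y : Submodule ℝ X) (A : Set X) (hAopen : IsOpen A) (hAconv : Convex ℝ A)
    (hne : (A ∩ (Y : Set X)).Nonempty)
    (δ : X → ℝ) (hδcont : ContinuousOn δ A) (hδqc : QuasiconvexOn ℝ A δ)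
    (hδnonneg : ∀ x ∈ A, 0 ≤ δ x)
    (hker : {x ∈ A | δ x = 0} = A ∩ (Y : Set X)) :
    ∃ U : ℕ → Set X, (∀ n, IsOpen (U n) ∧ Convex ℝ (U n)) ∧
      (⋂ n, U n) = A ∩ (Y : Set X) :=
  stmt_8_general Y A hAopen δ hδcont hδqc hδnonneg hker
end

section
/- Let X be a topological vector space, Y ⊆ X a subspace, and A ⊆ X an open convex set intersecting Y. If A ∩ Y is the intersection of countably many open convex subsets of X, then there exists a continuous quasiconvex function δ : A → [0,∞) with δ⁻¹(0) = A ∩ Y. -/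
/-!
Pick `y₀ ∈ A ∩ Y`. For each `n`, the gauge of `U n - y₀`, evaluated at `x - y₀`, is a continuous
convex function that is `≤ 1` exactly on `closure (U n)`; shifting it by `1` and truncating to
`[0, 2⁻ⁿ]` gives a continuous quasiconvex `fₙ ≥ 0` vanishing exactly on `closure (U n)`.
Take `δ = ⨆ n, fₙ`: suprema of quasiconvex functions are quasiconvex, and since `fₙ ≤ 2⁻ⁿ` the
supremum is a uniform limit of finite maxima, hence continuous. If `δ x = 0` then `x` lies in
every `closure (U n)`, so the midpoint of `y₀` and `x` lies in every open convex `U n`, hence in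
`Y`, and therefore so does `x`.
-/

open Set Filter Topology

section Quasiconvex

variable {𝕜 E β ι : Type*} [Semiring 𝕜] [PartialOrder 𝕜] [AddCommMonoid E] [SMul 𝕜 E]
  [ConditionallyCompleteLinearOrder β] [Nonempty ι] {s : Set E} {f : ι → E → β}

theorem QuasiconvexOn.ciSup (hf : ∀ i, QuasiconvexOn 𝕜 s (f i))
    (hbdd : ∀ x ∈ s, BddAbove (range fun i => f i x)) :
    QuasiconvexOn 𝕜 s fun x => ⨆ i, f i x := by
  intro r
  have : {x ∈ s | ⨆ i, f i x ≤ r} = ⋂ i, {x ∈ s | f i x ≤ r} := by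
    ext x
    simp only [mem_ofPred_eq, mem_iInter]
    constructor
    · rintro ⟨hx, hr⟩ i
      exact ⟨hx, (ciSup_le_iff (hbdd x hx)).1 hr i⟩
    · intro h
      obtain ⟨hx, -⟩ := h (Classical.arbitrary ι)
      exact ⟨hx, ciSup_le fun i => (h i).2⟩
  rw [this]
  exact convex_iInter fun i => hf i r

end Quasiconvex

theorem convexOn_gauge {E : Type*} [AddCommGroup E] [Module ℝ E] {s : Set E} (hs : Convex ℝ s)
    (absorbs : Absorbent ℝ s) : ConvexOn ℝ univ (gauge s) :=
  ⟨convex_univ, fun x _ y _ a b ha hb _ =>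
    calc gauge s (a • x + b • y) ≤ gauge s (a • x) + gauge s (b • y) := gauge_add_le hs absorbs _ _
      _ = a • gauge s x + b • gauge s y := by
        rw [gauge_smul_of_nonneg ha, gauge_smul_of_nonneg hb]⟩

section SupOfVanishing

variable {X : Type*} {f : ℕ → X → ℝ} {u : ℕ → ℝ}

theorem bddAbove_range_apply_of_le (hfu : ∀ n x, f n x ≤ u n) (hu : Tendsto u atTop (𝓝 0))
    (x : X) : BddAbove (range fun n => f n x) := by
  obtain ⟨C, hC⟩ := hu.bddAbove_range
  exact ⟨C, forall_mem_range.2 fun n => (hfu n x).trans (hC (mem_range_self n))⟩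

theorem iSup_eq_zero_iff_of_le (hf₀ : ∀ n x, 0 ≤ f n x) (hfu : ∀ n x, f n x ≤ u n)
    (hu : Tendsto u atTop (𝓝 0)) (x : X) : ⨆ n, f n x = 0 ↔ ∀ n, f n x = 0 := by
  refine ⟨fun h n => le_antisymm ?_ (hf₀ n x), fun h => by simp [h]⟩
  exact h ▸ le_ciSup (bddAbove_range_apply_of_le hfu hu x) n

theorem iSup_le_max_partialSups {N : ℕ} {ε : ℝ}
    (hε : ∀ n ≥ N, ∀ x, f n x ≤ ε) (x : X) : ⨆ n, f n x ≤ max (partialSups f N x) ε := by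
  refine ciSup_le fun n => ?_
  rcases le_total n N with h | h
  · exact le_max_of_le_left (le_partialSups_of_le f h x)
  · exact le_max_of_le_right (hε n h x)

theorem continuous_iSup_of_le_of_tendsto_zero [TopologicalSpace X] (hf : ∀ n, Continuous (f n))
    (hf₀ : ∀ n x, 0 ≤ f n x) (hfu : ∀ n x, f n x ≤ u n) (hu : Tendsto u atTop (𝓝 0)) :
    Continuous fun x => ⨆ n, f n x := by
  have hcont : ∀ N, Continuous (partialSups f N) := by
    intro N
    induction N with
    | zero => simpa using hf 0
    | succ N ih => rw [← Order.succ_eq_add_one, partialSups_succ]; exact ih.sup (hf (N + 1))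
  refine TendstoUniformly.continuous (F := fun N => partialSups f N) ?_
    (Frequently.of_forall (f := atTop) hcont)
  rw [Metric.tendstoUniformly_iff]
  intro ε hε
  obtain ⟨N₀, hN₀⟩ := eventually_atTop.1 (hu.eventually (gt_mem_nhds (half_pos hε)))
  refine eventually_atTop.2 ⟨N₀, fun N hN x => ?_⟩
  have hle := iSup_le_max_partialSups (N := N) (ε := ε / 2)
    (fun n hn x => (hfu n x).trans (hN₀ n (hN.trans hn)).le) x
  have hge : partialSups f N x ≤ ⨆ n, f n x :=
    partialSups_le f N (fun x => ⨆ n, f n x)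
      (fun n _ x => le_ciSup (bddAbove_range_apply_of_le hfu hu x) n) x
  have hpos : 0 ≤ partialSups f N x := (hf₀ 0 x).trans (le_partialSups_of_le f N.zero_le x)
  have hmax : max (partialSups f N x) (ε / 2) ≤ partialSups f N x + ε / 2 :=
    max_le (by linarith) (by linarith)
  rw [Real.dist_eq, abs_of_nonneg (sub_nonneg.2 hge)]
  linarith

end SupOfVanishing

theorem exists_continuous_quasiconvex_zero_iff_mem_closure {E : Type*} [AddCommGroup E]
    [Module ℝ E] [TopologicalSpace E] [IsTopologicalAddGroup E] [ContinuousSMul ℝ E] {U : Set E}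
    {y : E} (hUo : IsOpen U) (hUc : Convex ℝ U) (hy : y ∈ U) {ε : ℝ} (hε : 0 < ε) :
    ∃ φ : E → ℝ, Continuous φ ∧ QuasiconvexOn ℝ univ φ ∧ (∀ x, 0 ≤ φ x ∧ φ x ≤ ε) ∧
      ∀ x, φ x = 0 ↔ x ∈ closure U := by
  set S := (· + y) ⁻¹' U
  have hSc : Convex ℝ S := hUc.translate_preimage_left y
  have hS₀ : S ∈ 𝓝 0 := (hUo.preimage (continuous_add_const y)).mem_nhds (by simpa [S] using hy)
  have hconv : ConvexOn ℝ univ fun x => gauge S (x - y) := by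
    simpa [sub_eq_neg_add, Function.comp_def] using
      (convexOn_gauge hSc (absorbent_nhds_zero hS₀)).translate_right (-y)
  refine ⟨fun x => min ε (max (gauge S (x - y) - 1) 0), by fun_prop,
    hconv.quasiconvexOn.monotone_comp (g := fun t => min ε (max (t - 1) 0))
      (monotone_const.min fun _ _ h => max_le_max (by linarith) le_rfl),
    fun x => ⟨by positivity, min_le_left _ _⟩, fun x => ?_⟩
  have hclosure : x - y ∈ closure S ↔ x ∈ closure U := by
    rw [show S = Homeomorph.addRight y ⁻¹' U from rfl, ← Homeomorph.preimage_closure]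
    simp
  rw [← hclosure, ← gauge_le_one_iff_mem_closure hSc hS₀]
  grind

theorem Submodule.mem_of_forall_mem_closure {E ι : Type*} [AddCommGroup E] [Module ℝ E]
    [TopologicalSpace E] [IsTopologicalAddGroup E] [ContinuousConstSMul ℝ E] {Y : Submodule ℝ E}
    {U : ι → Set E} (hU : ∀ i, IsOpen (U i) ∧ Convex ℝ (U i)) (hUY : ⋂ i, U i ⊆ Y) {y x : E}
    (hy : y ∈ ⋂ i, U i) (hx : ∀ i, x ∈ closure (U i)) : x ∈ Y := by
  have hmid : midpoint ℝ y x ∈ ⋂ i, U i := mem_iInter.2 fun i => by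
    have := (hU i).2.openSegment_interior_closure_subset_interior
      ((hU i).1.interior_eq.symm ▸ mem_iInter.1 hy i) (hx i) (midpoint_mem_openSegment y x)
    rwa [(hU i).1.interior_eq] at this
  have hyx : y + x ∈ Y := by
    simpa [midpoint_eq_smul_add, smul_smul] using Y.smul_mem (2 : ℝ) (hUY hmid)
  exact (Y.add_mem_iff_right (hUY hy)).1 hyx

theorem stmt_9_general {X : Type*} [AddCommGroup X] [Module ℝ X] [TopologicalSpace X]
    [IsTopologicalAddGroup X] [ContinuousSMul ℝ X]
    (Y : Submodule ℝ X) (A : Set X) (hAconv : Convex ℝ A)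
    (hne : (A ∩ (Y : Set X)).Nonempty)
    (U : ℕ → Set X) (hU : ∀ n, IsOpen (U n) ∧ Convex ℝ (U n))
    (hInter : (⋂ n, U n) = A ∩ (Y : Set X)) :
    ∃ δ : X → ℝ, ContinuousOn δ A ∧ QuasiconvexOn ℝ A δ ∧
      (∀ x ∈ A, 0 ≤ δ x) ∧ {x ∈ A | δ x = 0} = A ∩ (Y : Set X) := by
  obtain ⟨y₀, hy₀⟩ := hne
  have hy₀U : y₀ ∈ ⋂ n, U n := hInter ▸ hy₀
  choose f hf_cont hf_qc hf_bounds hf_zero using fun n =>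
    exists_continuous_quasiconvex_zero_iff_mem_closure (hU n).1 (hU n).2 (mem_iInter.1 hy₀U n)
      (pow_pos (one_half_pos (α := ℝ)) n)
  have hlim : Tendsto (fun n : ℕ => (1 / 2 : ℝ) ^ n) atTop (𝓝 0) :=
    tendsto_pow_atTop_nhds_zero_of_lt_one (by norm_num) (by norm_num)
  have hf_nonneg n x := (hf_bounds n x).1
  have hf_le n x := (hf_bounds n x).2
  refine ⟨fun x => ⨆ n, f n x,
    (continuous_iSup_of_le_of_tendsto_zero hf_cont hf_nonneg hf_le hlim).continuousOn,
    hAconv.quasiconvexOn_restrict (QuasiconvexOn.ciSup hf_qc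
      fun x _ => bddAbove_range_apply_of_le hf_le hlim x) (subset_univ A),
    fun x _ => Real.iSup_nonneg (hf_nonneg · x), ?_⟩
  ext x
  simp only [mem_ofPred_eq, iSup_eq_zero_iff_of_le hf_nonneg hf_le hlim, hf_zero]
  exact ⟨fun ⟨hxA, hx⟩ => ⟨hxA, Y.mem_of_forall_mem_closure hU (hInter ▸ inter_subset_right)
    hy₀U hx⟩, fun hx => ⟨hx.1, fun n => subset_closure (mem_iInter.1 (hInter ▸ hx) n)⟩⟩

theorem stmt_9 {X : Type*} [AddCommGroup X] [Module ℝ X] [TopologicalSpace X]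
    [IsTopologicalAddGroup X] [ContinuousSMul ℝ X]
    (Y : Submodule ℝ X) (A : Set X) (hAopen : IsOpen A) (hAconv : Convex ℝ A)
    (hne : (A ∩ (Y : Set X)).Nonempty)
    (U : ℕ → Set X) (hU : ∀ n, IsOpen (U n) ∧ Convex ℝ (U n))
    (hInter : (⋂ n, U n) = A ∩ (Y : Set X)) :
    ∃ δ : X → ℝ, ContinuousOn δ A ∧ QuasiconvexOn ℝ A δ ∧
      (∀ x ∈ A, 0 ≤ δ x) ∧ {x ∈ A | δ x = 0} = A ∩ (Y : Set X) :=
  stmt_9_general Y A hAconv hne U hU hInter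
end

section
/- Let X be a topological vector space and Y ⊆ X a closed subspace. There exists a continuous convex function d : X → [0,∞) with d⁻¹(0) = Y if and only if there exists an open convex set V ⊆ X such that ⋂_{ε>0} εV = Y. -/
/-!
Given `d`, the open convex set `V = {d < 1}` works: convexity with `d 0 = 0` gives
`d (ε • v) ≤ ε * d v` for `ε ≤ 1`, so every point of `⋂ ε > 0, ε • V` has `d < ε` for all small `ε`;
conversely the subspace `Y = {d = 0}` lies in every `ε • V`. Given `V`, take its gauge
(Minkowski functional): it is continuous because `V` is a convex neighbourhood of `0`, convex
because it is subadditive and positively homogeneous, and `{gauge V ≤ 0} = ⋂ ε > 0, ε • V`.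
-/

open Pointwise Set

section

variable {X : Type*} [AddCommGroup X] [Module ℝ X]

theorem convexOn_gauge_s11 {V : Set X} (hV : Convex ℝ V) (hVabs : Absorbent ℝ V) :
    ConvexOn ℝ univ (gauge V) :=
  ⟨convex_univ, fun x _ y _ a b ha hb _ => by
    simpa only [gauge_smul_of_nonneg ha, gauge_smul_of_nonneg hb]
      using gauge_add_le hV hVabs (a • x) (b • y)⟩

theorem setOf_gauge_eq_zero {V : Set X} (hV : Convex ℝ V) (hV0 : (0 : X) ∈ V)
    (hVabs : Absorbent ℝ V) : {x | gauge V x = 0} = ⋂ ε > (0 : ℝ), ε • V := by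
  rw [← setOfPred_gauge_le_eq hV hV0 hVabs le_rfl]
  ext x
  exact (gauge_nonneg x).ge_iff_eq'.symm

theorem ConvexOn.map_smul_le_of_map_zero {d : X → ℝ} (hd : ConvexOn ℝ univ d) (hd0 : d 0 = 0)
    {t : ℝ} (ht0 : 0 ≤ t) (ht1 : t ≤ 1) (x : X) : d (t • x) ≤ t * d x := by
  simpa [hd0] using hd.2 (mem_univ x) (mem_univ 0) ht0 (sub_nonneg.2 ht1) (add_sub_cancel t 1)

theorem ConvexOn.nonpos_of_mem_iInter_smul_setOf_lt_one {d : X → ℝ} (hd : ConvexOn ℝ univ d)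
    (hd0 : d 0 = 0) {x : X} (hx : x ∈ ⋂ ε > (0 : ℝ), ε • {y | d y < 1}) : d x ≤ 0 := by
  by_contra! hpos
  obtain ⟨ε, hεx, hε1, hε⟩ : ∃ ε : ℝ, ε ≤ d x ∧ ε ≤ 1 ∧ 0 < ε :=
    ⟨_, min_le_left _ _, min_le_right _ _, lt_min hpos one_pos⟩
  obtain ⟨v, hv, rfl⟩ := mem_iInter₂.1 hx ε hε
  have : d (ε • v) < ε :=
    (hd.map_smul_le_of_map_zero hd0 hε.le hε1 v).trans_lt (mul_lt_of_lt_one_right hε hv)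
  exact this.not_ge hεx

theorem Submodule.coe_subset_smul_set {Y : Submodule ℝ X} {V : Set X} (hYV : (Y : Set X) ⊆ V)
    {ε : ℝ} (hε : ε ≠ 0) : (Y : Set X) ⊆ ε • V := fun y hy =>
  (mem_smul_set_iff_inv_smul_mem₀ hε V y).2 (hYV (Y.smul_mem ε⁻¹ hy))

theorem ConvexOn.iInter_smul_setOf_lt_one {d : X → ℝ} (hd : ConvexOn ℝ univ d)
    (hd_nonneg : ∀ x, 0 ≤ d x) {Y : Submodule ℝ X} (hdY : {x | d x = 0} = (Y : Set X)) :
    ⋂ ε > (0 : ℝ), ε • {x | d x < 1} = Y := by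
  have hd0 : d 0 = 0 := hdY.symm.subset Y.zero_mem
  refine Subset.antisymm (fun x hx => ?_) (subset_iInter₂ fun ε hε => ?_)
  · exact hdY.subset <|
      (hd.nonpos_of_mem_iInter_smul_setOf_lt_one hd0 hx).antisymm (hd_nonneg x)
  · refine Submodule.coe_subset_smul_set (fun y hy => ?_) hε.ne'
    exact (hdY.symm.subset hy : d y = 0).trans_lt one_pos

end

theorem stmt_11_general {X : Type*} [AddCommGroup X] [Module ℝ X] [TopologicalSpace X]
    [IsTopologicalAddGroup X] [ContinuousSMul ℝ X]
    (Y : Submodule ℝ X) :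
    (∃ d : X → ℝ, Continuous d ∧ ConvexOn ℝ Set.univ d ∧ (∀ x, 0 ≤ d x) ∧
        {x | d x = 0} = (Y : Set X)) ↔
    (∃ V : Set X, IsOpen V ∧ Convex ℝ V ∧ (⋂ ε > (0:ℝ), ε • V) = (Y : Set X)) := by
  constructor
  · rintro ⟨d, hd_cont, hd_conv, hd_nonneg, hdY⟩
    exact ⟨{x | d x < 1}, isOpen_lt hd_cont continuous_const,
      by simpa using hd_conv.convex_lt 1, hd_conv.iInter_smul_setOf_lt_one hd_nonneg hdY⟩
  · rintro ⟨V, hV_open, hV_conv, hVY⟩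
    have hV0 : (0 : X) ∈ V := by
      simpa using mem_iInter₂.1 (hVY.symm.subset Y.zero_mem) 1 one_pos
    have hV_nhds : V ∈ nhds (0 : X) := hV_open.mem_nhds hV0
    have hV_abs : Absorbent ℝ V := absorbent_nhds_zero hV_nhds
    exact ⟨gauge V, continuous_gauge hV_conv hV_nhds, convexOn_gauge_s11 hV_conv hV_abs, gauge_nonneg,
      (setOf_gauge_eq_zero hV_conv hV0 hV_abs).trans hVY⟩

theorem stmt_11 {X : Type*} [AddCommGroup X] [Module ℝ X] [TopologicalSpace X]
    [IsTopologicalAddGroup X] [ContinuousSMul ℝ X]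
    (Y : Submodule ℝ X) (hYclosed : IsClosed (Y : Set X)) :
    (∃ d : X → ℝ, Continuous d ∧ ConvexOn ℝ Set.univ d ∧ (∀ x, 0 ≤ d x) ∧
        {x | d x = 0} = (Y : Set X)) ↔
    (∃ V : Set X, IsOpen V ∧ Convex ℝ V ∧ (⋂ ε > (0:ℝ), ε • V) = (Y : Set X)) :=
  stmt_11_general Y
end

section
/- Let X be a topological vector space and Y ⊆ X a closed subspace. If V ⊆ X is an open convex set with ⋂_{ε>0} εV = Y, then V + Y = V, and the image U := q(V) under the quotient map q : X → X/Y is an open convex neighborhood of 0 in X/Y that is algebraically bounded (contains no half-line), i.e. ⋂_{ε>0} εU = {0}. -/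
/-!
Since `Y ⊆ V` and `V` is open, every `v ∈ V` can be pushed slightly outward to `s • v ∈ V`
with `s > 1`; then `v + y` is a convex combination of `s • v` and a multiple of `y`, both in `V`,
so `V + Y = V`. Thus `V` and all its dilates `ε • V` are unions of cosets of `Y`, so they are
the full preimages of their images in `X ⧸ Y`. Pulling `⋂ ε > 0, ε • q(V)` back along `q`
therefore gives `⋂ ε > 0, ε • V = Y = q⁻¹ {0}`, and surjectivity of `q` gives the claim.
-/

open Pointwise

section TopologicalVectorSpace

variable {X : Type*} [AddCommGroup X] [Module ℝ X] [TopologicalSpace X] [ContinuousSMul ℝ X]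

theorem IsOpen.exists_one_lt_smul_mem {V : Set X} (hV : IsOpen V) {v : X} (hv : v ∈ V) :
    ∃ s : ℝ, 1 < s ∧ s • v ∈ V := by
  have hnhds : ∀ᶠ s in nhds (1 : ℝ), s • v ∈ V :=
    (continuous_id.smul continuous_const).continuousAt.preimage_mem_nhds
      (hV.mem_nhds (by simpa using hv))
  obtain ⟨s, hsv, hs1⟩ :=
    ((hnhds.filter_mono nhdsWithin_le_nhds).and (self_mem_nhdsWithin (s := Set.Ioi 1))).exists
  exact ⟨s, hs1, hsv⟩

theorem Convex.add_submodule_eq_self {V : Set X} (hVc : Convex ℝ V) (hVo : IsOpen V)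
    {Y : Submodule ℝ X} (hYV : (Y : Set X) ⊆ V) : V + (Y : Set X) = V := by
  refine (Set.subset_add_left V Y.zero_mem).antisymm' ?_
  rintro _ ⟨v, hv, y, hy, rfl⟩
  obtain ⟨s, hs1, hsv⟩ := hVo.exists_one_lt_smul_mem hv
  have hs0 : s ≠ 0 := by positivity
  have ht : 1 - s⁻¹ ≠ 0 := sub_ne_zero.2 (inv_lt_one_of_one_lt₀ hs1).ne'
  have hcombo : s⁻¹ • (s • v) + (1 - s⁻¹) • ((1 - s⁻¹)⁻¹ • y) = v + y := by
    rw [smul_smul, smul_smul, inv_mul_cancel₀ hs0, mul_inv_cancel₀ ht, one_smul, one_smul]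
  simpa only [hcombo] using hVc hsv (hYV (Y.smul_mem (1 - s⁻¹)⁻¹ hy)) (by positivity)
    (sub_nonneg.2 (inv_le_one_of_one_le₀ hs1.le)) (add_sub_cancel _ _)

end TopologicalVectorSpace

namespace Submodule

theorem preimage_mkQ_image_of_add_eq {R X : Type*} [Ring R] [AddCommGroup X] [Module R X]
    {Y : Submodule R X} {S : Set X} (h : S + (Y : Set X) = S) :
    Y.mkQ ⁻¹' (Y.mkQ '' S) = S :=
  (QuotientAddGroup.preimage_image_mk_eq_add Y.toAddSubgroup S).trans h

theorem iInter_smul_image_mkQ_eq_zero {X : Type*} [AddCommGroup X] [Module ℝ X]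
    {Y : Submodule ℝ X} {V : Set X} (hVY : V + (Y : Set X) = V)
    (hV : (⋂ ε > (0:ℝ), ε • V) = (Y : Set X)) :
    (⋂ ε > (0:ℝ), ε • (Y.mkQ '' V)) = {0} := by
  have hdilate (ε : ℝ) (hε : ε ≠ 0) : Y.mkQ ⁻¹' (ε • (Y.mkQ '' V)) = ε • V := by
    rw [(isUnit_iff_ne_zero.2 hε).preimage_smul_set, preimage_mkQ_image_of_add_eq hVY]
  refine Y.mkQ_surjective.preimage_injective ?_
  calc Y.mkQ ⁻¹' ⋂ ε > (0:ℝ), ε • (Y.mkQ '' V) = ⋂ ε > (0:ℝ), ε • V := by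
        simp only [Set.preimage_iInter₂]
        exact Set.iInter₂_congr fun ε hε ↦ hdilate ε hε.ne'
    _ = Y.mkQ ⁻¹' {0} := by
        rw [hV]
        ext
        simp

end Submodule

theorem stmt_12_general {X : Type*} [AddCommGroup X] [Module ℝ X] [TopologicalSpace X]
    [IsTopologicalAddGroup X] [ContinuousSMul ℝ X]
    (Y : Submodule ℝ X)
    (V : Set X) (hVopen : IsOpen V) (hVconv : Convex ℝ V)
    (hV : (⋂ ε > (0:ℝ), ε • V) = (Y : Set X)) :
    V + (Y : Set X) = V ∧
    IsOpen (Submodule.Quotient.mk '' V : Set (X ⧸ Y)) ∧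
    Convex ℝ (Submodule.Quotient.mk '' V : Set (X ⧸ Y)) ∧
    (0 : X ⧸ Y) ∈ (Submodule.Quotient.mk '' V : Set (X ⧸ Y)) ∧
    (⋂ ε > (0:ℝ), ε • (Submodule.Quotient.mk '' V : Set (X ⧸ Y))) = {0} := by
  have hYV : (Y : Set X) ⊆ V := by
    simpa [← hV] using Set.biInter_subset_of_mem (s := Set.Ioi (0:ℝ)) (t := fun ε ↦ ε • V)
      (Set.mem_Ioi.2 one_pos)
  have hVY : V + (Y : Set X) = V := hVconv.add_submodule_eq_self hVopen hYV
  exact ⟨hVY, Y.isOpenMap_mkQ V hVopen, hVconv.linear_image Y.mkQ,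
    ⟨0, hYV Y.zero_mem, rfl⟩, Submodule.iInter_smul_image_mkQ_eq_zero hVY hV⟩

theorem stmt_12 {X : Type*} [AddCommGroup X] [Module ℝ X] [TopologicalSpace X]
    [IsTopologicalAddGroup X] [ContinuousSMul ℝ X]
    (Y : Submodule ℝ X) (hYclosed : IsClosed (Y : Set X))
    (V : Set X) (hVopen : IsOpen V) (hVconv : Convex ℝ V)
    (hV : (⋂ ε > (0:ℝ), ε • V) = (Y : Set X)) :
    V + (Y : Set X) = V ∧
    IsOpen (Submodule.Quotient.mk '' V : Set (X ⧸ Y)) ∧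
    Convex ℝ (Submodule.Quotient.mk '' V : Set (X ⧸ Y)) ∧
    (0 : X ⧸ Y) ∈ (Submodule.Quotient.mk '' V : Set (X ⧸ Y)) ∧
    (⋂ ε > (0:ℝ), ε • (Submodule.Quotient.mk '' V : Set (X ⧸ Y))) = {0} :=
  stmt_12_general Y V hVopen hVconv hV
end

section
/- Let X be a topological vector space, Y ⊆ X a subspace, and A ⊆ X an open convex set intersecting Y. Suppose every continuous quasiconvex function on A ∩ Y extends to a continuous quasiconvex function on A. Then for each Ω(A∩Y)-family {C_α}_{α∈ℝ} of relatively open convex sets in Y there exists an Ω(A)-family {D_α}_{α∈ℝ} of open convex sets in X such that ⋃_{γ<α} C_γ ⊆ D_α ∩ Y ⊆ C_α for every α ∈ ℝ. -/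
/-!
An Ω(E)-family `C` is the family of strict sublevel sets of its level function
`f x = inf {α | x ∈ C α}`: for `x ∈ E`, `f x < α` iff `x ∈ C γ` for some `γ < α`.
Relative openness of the `C α` together with the closure condition makes `f` continuous on `E`,
and convexity of the `C α` makes it quasiconvex. Extending `f` to a continuous quasiconvex `F`
on `A`, the strict sublevel sets `{x ∈ A | F x < α}` form the required Ω(A)-family.
-/

/-- `D` is an Ω(E)-family in the ambient space: empty intersection, union `E`,
and the closure of `D α` relative to `E` is contained in `D β` whenever `α < β`. -/
def IsOmegaFamily {X : Type*} [TopologicalSpace X] (E : Set X) (D : ℝ → Set X) : Prop :=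
  (⋂ α : ℝ, D α) = ∅ ∧ (⋃ α : ℝ, D α) = E ∧
    ∀ α β : ℝ, α < β → closure (D α) ∩ E ⊆ D β

open Set Filter Topology

/-- Outside `⋃ α, C α` this is the junk value `sInf ∅ = 0`. -/
noncomputable def omegaLevel {X : Type*} (C : ℝ → Set X) (x : X) : ℝ :=
  sInf {α | x ∈ C α}

namespace IsOmegaFamily

variable {X : Type*} [TopologicalSpace X] {E : Set X} {C : ℝ → Set X}

theorem subset (h : IsOmegaFamily E C) (α : ℝ) : C α ⊆ E :=
  h.2.1 ▸ subset_iUnion C α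

theorem monotone (h : IsOmegaFamily E C) : Monotone C := by
  intro α β hαβ x hx
  rcases hαβ.eq_or_lt with rfl | hlt
  · exact hx
  · exact h.2.2 α β hlt ⟨subset_closure hx, h.subset α hx⟩

theorem bddBelow_levels (h : IsOmegaFamily E C) (x : X) : BddBelow {α | x ∈ C α} := by
  obtain ⟨α₀, hα₀⟩ : ∃ α, x ∉ C α := by
    by_contra! hall
    simpa [h.1] using mem_iInter.mpr hall
  exact ⟨α₀, fun γ hγ => le_of_not_gt fun hlt => hα₀ (h.monotone hlt.le hγ)⟩

theorem omegaLevel_le (h : IsOmegaFamily E C) {x : X} {α : ℝ} (hx : x ∈ C α) :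
    omegaLevel C x ≤ α :=
  csInf_le (h.bddBelow_levels x) hx

theorem omegaLevel_lt_iff (h : IsOmegaFamily E C) {x : X} (hx : x ∈ E) {α : ℝ} :
    omegaLevel C x < α ↔ ∃ γ < α, x ∈ C γ := by
  have hne : {α | x ∈ C α}.Nonempty := mem_iUnion.mp (h.2.1 ▸ hx)
  rw [omegaLevel, csInf_lt_iff (h.bddBelow_levels x) hne]
  exact exists_congr fun _ => and_comm

theorem mem_of_omegaLevel_lt (h : IsOmegaFamily E C) {x : X} (hx : x ∈ E) {α : ℝ}
    (hlt : omegaLevel C x < α) : x ∈ C α := by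
  obtain ⟨γ, hγα, hxγ⟩ := (h.omegaLevel_lt_iff hx).mp hlt
  exact h.monotone hγα.le hxγ

theorem sep_omegaLevel_lt_eq_biUnion (h : IsOmegaFamily E C) (α : ℝ) :
    {x ∈ E | omegaLevel C x < α} = ⋃ γ < α, C γ := by
  ext x
  simp only [mem_ofPred_eq, mem_iUnion, exists_prop]
  constructor
  · rintro ⟨hx, hlt⟩
    exact (h.omegaLevel_lt_iff hx).mp hlt
  · rintro ⟨γ, hγα, hxγ⟩
    exact ⟨h.subset γ hxγ, (h.omegaLevel_le hxγ).trans_lt hγα⟩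

theorem sep_omegaLevel_le_eq_biInter (h : IsOmegaFamily E C) (r : ℝ) :
    {x ∈ E | omegaLevel C x ≤ r} = ⋂ β > r, C β := by
  ext x
  simp only [mem_ofPred_eq, mem_iInter]
  constructor
  · rintro ⟨hx, hle⟩ β hβ
    exact h.mem_of_omegaLevel_lt hx (hle.trans_lt hβ)
  · intro hall
    refine ⟨h.subset (r + 1) (hall _ (lt_add_one r)), ?_⟩
    exact le_of_forall_gt_imp_ge_of_dense fun β hβ => h.omegaLevel_le (hall β hβ)

theorem notMem_closure_of_lt_omegaLevel (h : IsOmegaFamily E C) {x : X} (hx : x ∈ E) {α : ℝ}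
    (hlt : α < omegaLevel C x) : x ∉ closure (C α) := by
  intro hcl
  obtain ⟨β, hαβ, hβ⟩ := exists_between hlt
  exact hβ.not_ge (h.omegaLevel_le (h.2.2 α β hαβ ⟨hcl, hx⟩))

theorem continuousOn_omegaLevel (h : IsOmegaFamily E C)
    (hopen : ∀ α, ∀ x ∈ C α, C α ∈ 𝓝[E] x) : ContinuousOn (omegaLevel C) E := by
  intro x hx
  refine tendsto_order.mpr ⟨fun a ha => ?_, fun b hb => ?_⟩
  · obtain ⟨a', haa', ha'⟩ := exists_between ha
    have hfar : (closure (C a'))ᶜ ∈ 𝓝[E] x :=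
      mem_nhdsWithin_of_mem_nhds <| isClosed_closure.isOpen_compl.mem_nhds
        (h.notMem_closure_of_lt_omegaLevel hx ha')
    filter_upwards [hfar, self_mem_nhdsWithin] with y hy hyE
    refine haa'.trans_le (le_of_not_gt fun hlt => hy (subset_closure ?_))
    exact h.mem_of_omegaLevel_lt hyE hlt
  · obtain ⟨γ, hγb, hxγ⟩ := (h.omegaLevel_lt_iff hx).mp hb
    filter_upwards [hopen γ x hxγ] with y hy
    exact (h.omegaLevel_le hy).trans_lt hγb

theorem quasiconvexOn_omegaLevel [AddCommGroup X] [Module ℝ X] (h : IsOmegaFamily E C)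
    (hconv : ∀ α, Convex ℝ (C α)) : QuasiconvexOn ℝ E (omegaLevel C) := by
  intro r
  rw [h.sep_omegaLevel_le_eq_biInter r]
  exact convex_iInter₂ fun β _ => hconv β

end IsOmegaFamily

theorem isOmegaFamily_sep_lt {X : Type*} [TopologicalSpace X] {A : Set X} {F : X → ℝ}
    (hA : IsOpen A) (hF : ContinuousOn F A) : IsOmegaFamily A fun α => {x ∈ A | F x < α} := by
  refine ⟨?_, ?_, ?_⟩
  · refine eq_empty_of_forall_notMem fun x hx => ?_
    exact lt_irrefl _ (mem_iInter.mp hx (F x)).2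
  · refine (iUnion_subset fun α => sep_subset A _).antisymm fun x hx => ?_
    exact mem_iUnion.mpr ⟨F x + 1, hx, lt_add_one (F x)⟩
  · rintro α β hαβ x ⟨hcl, hx⟩
    refine ⟨hx, lt_of_le_of_lt (le_of_not_gt fun hαF => ?_) hαβ⟩
    have hnear : {y | α < F y} ∈ 𝓝 x :=
      (hF.continuousAt (hA.mem_nhds hx)).preimage_mem_nhds (Ioi_mem_nhds hαF)
    obtain ⟨y, hyα, hy⟩ := mem_closure_iff_nhds.mp hcl _ hnear
    exact lt_asymm hyα hy.2

theorem stmt_16_general {X : Type*} [AddCommGroup X] [Module ℝ X] [TopologicalSpace X]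
    (Y : Submodule ℝ X) (A : Set X) (hAopen : IsOpen A)
    (hQE : ∀ f : X → ℝ, ContinuousOn f (A ∩ (Y : Set X)) →
      QuasiconvexOn ℝ (A ∩ (Y : Set X)) f →
      ∃ F : X → ℝ, ContinuousOn F A ∧ QuasiconvexOn ℝ A F ∧
        ∀ x ∈ A ∩ (Y : Set X), F x = f x) :
    ∀ C : ℝ → Set X,
      (∀ α, Convex ℝ (C α) ∧ ∃ G : Set X, IsOpen G ∧ C α = G ∩ (Y : Set X)) →
      IsOmegaFamily (A ∩ (Y : Set X)) C →
      ∃ D : ℝ → Set X, (∀ α, IsOpen (D α) ∧ Convex ℝ (D α)) ∧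
        IsOmegaFamily A D ∧
        ∀ α : ℝ, (⋃ γ < α, C γ) ⊆ D α ∩ (Y : Set X) ∧ D α ∩ (Y : Set X) ⊆ C α := by
  intro C hC hOmega
  have hrelOpen : ∀ α, ∀ x ∈ C α, C α ∈ 𝓝[A ∩ Y] x := by
    intro α x hx
    obtain ⟨G, hG, hCG⟩ := (hC α).2
    rw [hCG] at hx ⊢
    exact mem_nhdsWithin.mpr ⟨G, hG, hx.1, fun y hy => ⟨hy.1, hy.2.2⟩⟩
  obtain ⟨F, hFcont, hFqc, hFeq⟩ := hQE (omegaLevel C)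
    (hOmega.continuousOn_omegaLevel hrelOpen)
    (hOmega.quasiconvexOn_omegaLevel fun α => (hC α).1)
  refine ⟨fun α => {x ∈ A | F x < α},
    fun α => ⟨hFcont.isOpen_inter_preimage hAopen isOpen_Iio, hFqc.convex_lt α⟩,
    isOmegaFamily_sep_lt hAopen hFcont, fun α => ?_⟩
  have htrace : {x ∈ A | F x < α} ∩ Y = ⋃ γ < α, C γ := by
    rw [← hOmega.sep_omegaLevel_lt_eq_biUnion α]
    ext x
    simp only [mem_inter_iff, mem_ofPred_eq, SetLike.mem_coe]
    exact ⟨fun ⟨⟨hA, hlt⟩, hY⟩ => ⟨⟨hA, hY⟩, hFeq x ⟨hA, hY⟩ ▸ hlt⟩,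
      fun ⟨⟨hA, hY⟩, hlt⟩ => ⟨⟨hA, (hFeq x ⟨hA, hY⟩).symm ▸ hlt⟩, hY⟩⟩
  rw [htrace]
  exact ⟨subset_rfl, iUnion₂_subset fun γ hγ => hOmega.monotone hγ.le⟩

theorem stmt_16 {X : Type*} [AddCommGroup X] [Module ℝ X] [TopologicalSpace X]
    [IsTopologicalAddGroup X] [ContinuousSMul ℝ X]
    (Y : Submodule ℝ X) (A : Set X) (hAopen : IsOpen A) (hAconv : Convex ℝ A)
    (hne : (A ∩ (Y : Set X)).Nonempty)
    (hQE : ∀ f : X → ℝ, ContinuousOn f (A ∩ (Y : Set X)) →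
      QuasiconvexOn ℝ (A ∩ (Y : Set X)) f →
      ∃ F : X → ℝ, ContinuousOn F A ∧ QuasiconvexOn ℝ A F ∧
        ∀ x ∈ A ∩ (Y : Set X), F x = f x) :
    ∀ C : ℝ → Set X,
      (∀ α, Convex ℝ (C α) ∧ ∃ G : Set X, IsOpen G ∧ C α = G ∩ (Y : Set X)) →
      IsOmegaFamily (A ∩ (Y : Set X)) C →
      ∃ D : ℝ → Set X, (∀ α, IsOpen (D α) ∧ Convex ℝ (D α)) ∧
        IsOmegaFamily A D ∧
        ∀ α : ℝ, (⋃ γ < α, C γ) ⊆ D α ∩ (Y : Set X) ∧ D α ∩ (Y : Set X) ⊆ C α :=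
  stmt_16_general Y A hAopen hQE
end

section
/- Let X be a topological vector space, Y ⊆ X a closed subspace, and A ⊆ X an open convex set intersecting Y. Assume: (a) every continuous quasiconvex function on A ∩ Y extends to a continuous quasiconvex function on A; (b) there exists a continuous quasiconvex function δ : A → [0,∞) with δ⁻¹(0) = A ∩ Y. Then each non-constant continuous quasiconvex function f : A ∩ Y → ℝ admits a continuous quasiconvex extension F : A → ℝ such that F(A) = f(A ∩ Y) and, with a := inf F(A), the set {x ∈ A : F(x) = a} equals {y ∈ A ∩ Y : f(y) = a}. -/
/-!
Let `J = f(A ∩ Y)`, an interval since `A ∩ Y` is convex and `f` is continuous. First extend `f`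
without exceeding `J` from above: if `M = sup J` is attained, cut any extension off at `M`; if it
is finite but not attained, extend `σ ∘ f` instead, where `σ t = -log (M - t)` is an increasing
homeomorphism of `(-∞, M)` onto `ℝ`, and compose the result with `σ⁻¹ s = M - exp (-s)`.
If `m = inf J` is finite, replace this extension `G` by `max G (m + min δ (j₀ - m))` for some
`j₀ ∈ J` above `m`: the second term lies in `[m, j₀]` and equals `m` exactly on `A ∩ Y`, so the
new extension still takes its values in `J` and attains `m` only on `A ∩ Y`.
-/

open Set

theorem QuasiconvexOn.monotoneOn_comp {𝕜 E β γ : Type*} [Semiring 𝕜] [PartialOrder 𝕜]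
    [AddCommMonoid E] [SMul 𝕜 E] [LinearOrder β] [Preorder γ] {s : Set E} {t : Set β}
    {f : E → β} {g : β → γ} (hg : MonotoneOn g t) (hf : QuasiconvexOn 𝕜 s f)
    (hst : MapsTo f s t) : QuasiconvexOn 𝕜 s (g ∘ f) := by
  intro c x hx y hy a b ha hb hab
  wlog h : f x ≤ f y generalizing x y a b
  · simpa only [add_comm] using
      this hy hx hb ha (by rwa [add_comm]) (le_of_not_ge h)
  have hz := hf (f y) ⟨hx.1, h⟩ ⟨hy.1, le_rfl⟩ ha hb hab
  exact ⟨hz.1, (hg (hst hz.1) (hst hy.1) hz.2).trans hy.2⟩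

section

variable {X : Type*} {A S : Set X} {f G δ : X → ℝ}

theorem image_eq_of_mapsTo_closures (hJ : (f '' S).OrdConnected) (hSA : S ⊆ A)
    (hGf : EqOn G f S) (hlow : MapsTo G A (upperClosure (f '' S)))
    (hup : MapsTo G A (lowerClosure (f '' S))) : G '' A = f '' S := by
  refine Subset.antisymm ?_ (hGf.image_eq ▸ image_mono hSA)
  rintro _ ⟨x, hx, rfl⟩
  exact hJ.upperClosure_inter_lowerClosure ▸ ⟨hlow hx, hup hx⟩

theorem sep_eq_sep_of_eqOn {a : ℝ} (hSA : S ⊆ A) (hGf : EqOn G f S)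
    (hGa : ∀ x ∈ A, G x = a → x ∈ S) : {x ∈ A | G x = a} = {y ∈ S | f y = a} := by
  ext x
  constructor
  · rintro ⟨hx, hGx⟩
    exact ⟨hGa x hx hGx, (hGf (hGa x hx hGx)).symm.trans hGx⟩
  · rintro ⟨hxS, hfx⟩
    exact ⟨hSA hxS, (hGf hxS).trans hfx⟩

variable [AddCommMonoid X] [SMul ℝ X] [TopologicalSpace X]

def HasQuasiconvexExtensions (A S : Set X) : Prop :=
  ∀ g : X → ℝ, ContinuousOn g S → QuasiconvexOn ℝ S g →
    ∃ G : X → ℝ, ContinuousOn G A ∧ QuasiconvexOn ℝ A G ∧ EqOn G g S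

namespace HasQuasiconvexExtensions

theorem exists_comp_left (hext : HasQuasiconvexExtensions A S) {T : Set ℝ} {τ σ : ℝ → ℝ}
    (hτc : Continuous τ) (hτm : Monotone τ) (hσc : ContinuousOn σ T) (hσm : MonotoneOn σ T)
    (hτσ : EqOn (τ ∘ σ) id T) (hfT : MapsTo f S T) (hfc : ContinuousOn f S)
    (hfq : QuasiconvexOn ℝ S f) :
    ∃ H : X → ℝ, ContinuousOn (τ ∘ H) A ∧ QuasiconvexOn ℝ A (τ ∘ H) ∧ EqOn (τ ∘ H) f S := by
  obtain ⟨H, hHc, hHq, hHf⟩ := hext (σ ∘ f) (hσc.comp hfc hfT) (hfq.monotoneOn_comp hσm hfT)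
  exact ⟨H, hτc.comp_continuousOn hHc, hHq.monotone_comp hτm,
    fun y hy => (congrArg τ (hHf hy)).trans (hτσ (hfT hy))⟩

theorem exists_mapsTo_lowerClosure (hext : HasQuasiconvexExtensions A S) (hS : S.Nonempty)
    (hfc : ContinuousOn f S) (hfq : QuasiconvexOn ℝ S f) :
    ∃ G : X → ℝ, ContinuousOn G A ∧ QuasiconvexOn ℝ A G ∧ EqOn G f S ∧
      MapsTo G A (lowerClosure (f '' S)) := by
  by_cases hbdd : BddAbove (f '' S)
  swap
  · obtain ⟨G, hGc, hGq, hGf⟩ := hext f hfc hfq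
    refine ⟨G, hGc, hGq, hGf, fun x _ => ?_⟩
    obtain ⟨j, hj, hGj⟩ := not_bddAbove_iff.mp hbdd (G x)
    exact ⟨j, hj, hGj.le⟩
  set M := sSup (f '' S)
  have hfM : MapsTo f S (Iic M) := fun y hy => le_csSup hbdd (mem_image_of_mem f hy)
  by_cases hM : M ∈ f '' S
  · obtain ⟨H, hHc, hHq, hHf⟩ := hext.exists_comp_left (τ := fun s => min s M) (σ := id)
      (continuous_id.min continuous_const) (monotone_id.min monotone_const) continuousOn_id
      monotoneOn_id (fun t ht => min_eq_left ht) hfM hfc hfq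
    exact ⟨_, hHc, hHq, hHf, fun x _ => ⟨M, hM, min_le_right _ _⟩⟩
  · have hfM' : MapsTo f S (Iio M) := fun y hy =>
      (hfM hy).lt_of_ne fun h => hM ⟨y, hy, h⟩
    obtain ⟨H, hHc, hHq, hHf⟩ := hext.exists_comp_left
      (τ := fun s => M - Real.exp (-s)) (σ := fun t => -Real.log (M - t))
      (continuous_const.sub (Real.continuous_exp.comp continuous_neg))
      (fun a b hab => sub_le_sub_left (Real.exp_le_exp.mpr (neg_le_neg hab)) M)
      ((continuousOn_const.sub continuousOn_id).log fun t ht => (sub_pos.mpr ht).ne').neg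
      (fun a _ b hb hab => neg_le_neg (Real.log_le_log (sub_pos.mpr hb) (sub_le_sub_left hab M)))
      (fun t (ht : t < M) => by simp [Real.exp_log (sub_pos.mpr ht)]) hfM' hfc hfq
    refine ⟨_, hHc, hHq, hHf, fun x _ => ?_⟩
    obtain ⟨j, hj, hlt⟩ := exists_lt_of_lt_csSup (hS.image f) (sub_lt_self M (Real.exp_pos _))
    exact ⟨j, hj, hlt.le⟩

end HasQuasiconvexExtensions

theorem exists_extension_of_isGLB (hJ : (f '' S).OrdConnected) (hGc : ContinuousOn G A)
    (hGq : QuasiconvexOn ℝ A G) (hGf : EqOn G f S) (hGJ : MapsTo G A (lowerClosure (f '' S)))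
    (hδc : ContinuousOn δ A) (hδq : QuasiconvexOn ℝ A δ) (hδ0 : ∀ x ∈ A, 0 ≤ δ x)
    (hδS : {x ∈ A | δ x = 0} = S) {m j₀ : ℝ} (hm : IsGLB (f '' S) m) (hj₀ : j₀ ∈ f '' S)
    (hmj₀ : m < j₀) :
    ∃ F : X → ℝ, ContinuousOn F A ∧ QuasiconvexOn ℝ A F ∧ EqOn F f S ∧ F '' A = f '' S ∧
      ∀ x ∈ A, F x = m → x ∈ S := by
  set F : X → ℝ := fun x => max (G x) (m + min (δ x) (j₀ - m))
  have hSA : S ⊆ A := hδS ▸ sep_subset A _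
  have hFf : EqOn F f S := fun y hy => by
    have hδy : δ y = 0 := (hδS.symm ▸ hy : y ∈ {x ∈ A | δ x = 0}).2
    simp [F, hδy, hmj₀.le, hGf hy, hm.1 (mem_image_of_mem f hy)]
  have hmF : ∀ x ∈ A, m ≤ F x := fun x hx =>
    le_max_of_le_right (by linarith [le_min (hδ0 x hx) (sub_nonneg.2 hmj₀.le)])
  have hmem : ∀ x ∈ A, F x = m → x ∈ S := by
    intro x hx hFx
    have hmin : min (δ x) (j₀ - m) ≤ 0 := by
      linarith [le_max_right (G x) (m + min (δ x) (j₀ - m))]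
    rw [← hδS]
    exact ⟨hx, le_antisymm ((min_le_iff.mp hmin).resolve_right (by linarith)) (hδ0 x hx)⟩
  have hup : MapsTo F A (lowerClosure (f '' S)) := by
    intro x hx
    obtain ⟨j, hj, hGj⟩ := hGJ hx
    refine ⟨max j j₀, ?_, max_le_max hGj (by linarith [min_le_right (δ x) (j₀ - m)])⟩
    rcases max_choice j j₀ with h | h <;> rw [h] <;> assumption
  have hlow : MapsTo F A (upperClosure (f '' S)) := by
    intro x hx
    rcases (hmF x hx).eq_or_lt with hFx | hFx
    · have hxS := hmem x hx hFx.symm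
      exact ⟨F x, hFf hxS ▸ mem_image_of_mem f hxS, le_rfl⟩
    · obtain ⟨j, hj, -, hjF⟩ := hm.exists_between hFx
      exact ⟨j, hj, hjF.le⟩
  have hmono : Monotone fun t => m + min t (j₀ - m) := fun a b hab => by
    dsimp only
    gcongr
  exact ⟨F, hGc.sup (continuousOn_const.add (hδc.inf continuousOn_const)),
    hGq.sup (QuasiconvexOn.monotone_comp (f := δ) hmono hδq), hFf,
    image_eq_of_mapsTo_closures hJ hSA hFf hlow hup, hmem⟩

end

theorem stmt_18_general {X : Type*} [AddCommGroup X] [Module ℝ X] [TopologicalSpace X]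
    [IsTopologicalAddGroup X] [ContinuousSMul ℝ X]
    (Y : Submodule ℝ X)
    (A : Set X)
    (hQE : ∀ g : X → ℝ, ContinuousOn g (A ∩ (Y : Set X)) →
      QuasiconvexOn ℝ (A ∩ (Y : Set X)) g →
      ∃ G : X → ℝ, ContinuousOn G A ∧ QuasiconvexOn ℝ A G ∧
        ∀ x ∈ A ∩ (Y : Set X), G x = g x)
    (δ : X → ℝ) (hδcont : ContinuousOn δ A) (hδqc : QuasiconvexOn ℝ A δ)
    (hδnonneg : ∀ x ∈ A, 0 ≤ δ x)
    (hδker : {x ∈ A | δ x = 0} = A ∩ (Y : Set X)) :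
    ∀ f : X → ℝ, ContinuousOn f (A ∩ (Y : Set X)) →
      QuasiconvexOn ℝ (A ∩ (Y : Set X)) f →
      (∃ x ∈ A ∩ (Y : Set X), ∃ y ∈ A ∩ (Y : Set X), f x ≠ f y) →
      ∃ F : X → ℝ, ContinuousOn F A ∧ QuasiconvexOn ℝ A F ∧
        (∀ x ∈ A ∩ (Y : Set X), F x = f x) ∧
        F '' A = f '' (A ∩ (Y : Set X)) ∧
        ∀ a : ℝ, IsGLB (F '' A) a →
          {x ∈ A | F x = a} = {y ∈ A ∩ (Y : Set X) | f y = a} := by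
  intro f hfc hfq ⟨x₁, hx₁, x₂, hx₂, hf₁₂⟩
  set S := A ∩ (Y : Set X)
  have hJ : (f '' S).OrdConnected := (hfq.convex.isPreconnected.image f hfc).ordConnected
  obtain ⟨G, hGc, hGq, hGf, hGJ⟩ :=
    HasQuasiconvexExtensions.exists_mapsTo_lowerClosure hQE ⟨x₁, hx₁⟩ hfc hfq
  by_cases hbdd : BddBelow (f '' S)
  swap
  · have hGA : G '' A = f '' S := image_eq_of_mapsTo_closures hJ inter_subset_left hGf
      (fun x _ => (not_bddBelow_iff.mp hbdd (G x)).imp fun _ ⟨hj, hjG⟩ => ⟨hj, hjG.le⟩) hGJ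
    exact ⟨G, hGc, hGq, hGf, hGA, fun a ha => (hbdd ⟨a, (hGA ▸ ha).1⟩).elim⟩
  have hm : IsGLB (f '' S) (sInf (f '' S)) := isGLB_csInf ⟨_, mem_image_of_mem f hx₁⟩ hbdd
  obtain ⟨j₀, hj₀, hmj₀⟩ : ∃ j₀ ∈ f '' S, sInf (f '' S) < j₀ := by
    by_contra! h
    have hfx {x} (hx : x ∈ S) : f x = sInf (f '' S) :=
      le_antisymm (h _ (mem_image_of_mem f hx)) (hm.1 (mem_image_of_mem f hx))
    exact hf₁₂ ((hfx hx₁).trans (hfx hx₂).symm)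
  obtain ⟨F, hFc, hFq, hFf, hFA, hFm⟩ :=
    exists_extension_of_isGLB hJ hGc hGq hGf hGJ hδcont hδqc hδnonneg hδker hm hj₀ hmj₀
  refine ⟨F, hFc, hFq, hFf, hFA, fun a ha => ?_⟩
  obtain rfl : a = sInf (f '' S) := (hFA ▸ ha).unique hm
  exact sep_eq_sep_of_eqOn inter_subset_left hFf hFm

theorem stmt_18 {X : Type*} [AddCommGroup X] [Module ℝ X] [TopologicalSpace X]
    [IsTopologicalAddGroup X] [ContinuousSMul ℝ X]
    (Y : Submodule ℝ X) (hYclosed : IsClosed (Y : Set X))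
    (A : Set X) (hAopen : IsOpen A) (hAconv : Convex ℝ A)
    (hne : (A ∩ (Y : Set X)).Nonempty)
    (hQE : ∀ g : X → ℝ, ContinuousOn g (A ∩ (Y : Set X)) →
      QuasiconvexOn ℝ (A ∩ (Y : Set X)) g →
      ∃ G : X → ℝ, ContinuousOn G A ∧ QuasiconvexOn ℝ A G ∧
        ∀ x ∈ A ∩ (Y : Set X), G x = g x)
    (δ : X → ℝ) (hδcont : ContinuousOn δ A) (hδqc : QuasiconvexOn ℝ A δ)
    (hδnonneg : ∀ x ∈ A, 0 ≤ δ x)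
    (hδker : {x ∈ A | δ x = 0} = A ∩ (Y : Set X)) :
    ∀ f : X → ℝ, ContinuousOn f (A ∩ (Y : Set X)) →
      QuasiconvexOn ℝ (A ∩ (Y : Set X)) f →
      (∃ x ∈ A ∩ (Y : Set X), ∃ y ∈ A ∩ (Y : Set X), f x ≠ f y) →
      ∃ F : X → ℝ, ContinuousOn F A ∧ QuasiconvexOn ℝ A F ∧
        (∀ x ∈ A ∩ (Y : Set X), F x = f x) ∧
        F '' A = f '' (A ∩ (Y : Set X)) ∧
        ∀ a : ℝ, IsGLB (F '' A) a →
          {x ∈ A | F x = a} = {y ∈ A ∩ (Y : Set X) | f y = a} :=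
  stmt_18_general Y A hQE δ hδcont hδqc hδnonneg hδker
end
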